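/- Let α and α' be distinct, non-orthogonal simple roots and let δ be a root. If δ+α is nonzero and is not a root, then δ+α−α' is not a root. -/

import Mathlib

open scoped RealInnerProductSpace BigOperators

/-- A reduced crystallographic root system `Φ` in a finite-dimensional real inner product
space (orthogonality being given by the inner product; for roots `α, β`, the pairing with
the coroot is `(β, α∨) = 2⟪β, α⟫/⟪α, α⟫`). -/
structure IsReducedCrystRootSystem {V : Type} [NormedAddCommGroup V]
    [InnerProductSpace ℝ V] [FiniteDimensional ℝ V] (Φ : Set V) : Prop where
  finite : Φ.Finite
  ne_zero : ∀ α ∈ Φ, α ≠ (0 : V)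
  reflect_mem : ∀ α ∈ Φ, ∀ β ∈ Φ, β - (2 * ⟪β, α⟫ / ⟪α, α⟫) • α ∈ Φ
  crystallographic : ∀ α ∈ Φ, ∀ β ∈ Φ, ∃ n : ℤ, 2 * ⟪β, α⟫ / ⟪α, α⟫ = (n : ℝ)
  reduced : ∀ α ∈ Φ, ∀ t : ℝ, t • α ∈ Φ → t = 1 ∨ t = -1

/-- `s : Fin n → V` is a base (set of simple roots) of the root system `Φ`: the `s i` are
linearly independent roots and every root is an integral linear combination of them with
either all coefficients nonnegative or all coefficients nonpositive. -/
structure IsBaseOf {V : Type} [NormedAddCommGroup V] [InnerProductSpace ℝ V]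
    [FiniteDimensional ℝ V] (Φ : Set V) {n : ℕ} (s : Fin n → V) : Prop where
  mem : ∀ i, s i ∈ Φ
  indep : LinearIndependent ℝ s
  decomp : ∀ β ∈ Φ, ∃ c : Fin n → ℤ, β = ∑ i, c i • s i ∧
    ((∀ i, 0 ≤ c i) ∨ (∀ i, c i ≤ 0))

section Aux

variable {V : Type} [NormedAddCommGroup V] [InnerProductSpace ℝ V] [FiniteDimensional ℝ V]
  {Φ : Set V}

lemma inner_self_pos' (hΦ : IsReducedCrystRootSystem Φ) {β : V} (hβ : β ∈ Φ) :
    0 < ⟪β, β⟫ := by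
  have h2 : ⟪β, β⟫ ≠ 0 := inner_self_ne_zero.2 (hΦ.ne_zero β hβ)
  exact lt_of_le_of_ne real_inner_self_nonneg (Ne.symm h2)

lemma neg_mem' (hΦ : IsReducedCrystRootSystem Φ) {β : V} (hβ : β ∈ Φ) : -β ∈ Φ := by
  have h := hΦ.reflect_mem β hβ β hβ
  have hb := (inner_self_pos' hΦ hβ).ne'
  have hcoef : 2 * ⟪β, β⟫ / ⟪β, β⟫ = (2:ℝ) := by field_simp
  rw [hcoef] at h
  convert h using 1
  module

lemma strict_cs (hΦ : IsReducedCrystRootSystem Φ) {β γ : V} (hβ : β ∈ Φ) (hγ : γ ∈ Φ)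
    (hprop : ∀ t : ℝ, β ≠ t • γ) :
    (2 * ⟪β, γ⟫ / ⟪γ, γ⟫) * (2 * ⟪γ, β⟫ / ⟪β, β⟫) < 4 := by
  have hB := inner_self_pos' hΦ hβ
  have hG := inner_self_pos' hΦ hγ
  set t : ℝ := ⟪β, γ⟫ / ⟪γ, γ⟫ with ht
  have hw : β - t • γ ≠ 0 := by
    intro h
    exact hprop t (by rw [sub_eq_zero] at h; exact h)
  have hpos : 0 < ⟪β - t • γ, β - t • γ⟫ := by
    have h2 : ⟪β - t • γ, β - t • γ⟫ ≠ 0 := inner_self_ne_zero.2 hw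
    exact lt_of_le_of_ne real_inner_self_nonneg (Ne.symm h2)
  have hexp : ⟪β - t • γ, β - t • γ⟫ = ⟪β, β⟫ - ⟪β, γ⟫ ^ 2 / ⟪γ, γ⟫ := by
    simp only [inner_sub_sub_self, real_inner_smul_left, real_inner_smul_right, real_inner_comm γ β, ht]
    field_simp
    ring
  rw [hexp] at hpos
  have key : ⟪β, γ⟫ ^ 2 < ⟪β, β⟫ * ⟪γ, γ⟫ := by
    have := (div_lt_iff₀ hG).mp (by linarith : ⟪β, γ⟫ ^ 2 / ⟪γ, γ⟫ < ⟪β, β⟫)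
    linarith
  have hc : ⟪γ, β⟫ = ⟪β, γ⟫ := real_inner_comm β γ
  have h4 : 2 * ⟪β, γ⟫ * (2 * ⟪γ, β⟫) = 4 * ⟪β, γ⟫ ^ 2 := by rw [hc]; ring
  rw [div_mul_div_comm, div_lt_iff₀ (by positivity), h4]
  linarith

lemma sub_mem_of_inner_pos (hΦ : IsReducedCrystRootSystem Φ) {β γ : V} (hβ : β ∈ Φ)
    (hγ : γ ∈ Φ) (hpos : 0 < ⟪β, γ⟫) (hne : β ≠ γ) : β - γ ∈ Φ := by
  have hB := inner_self_pos' hΦ hβ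
  have hG := inner_self_pos' hΦ hγ
  by_cases hprop : ∃ t : ℝ, β = t • γ
  · obtain ⟨t, rfl⟩ := hprop
    rcases hΦ.reduced γ hγ t hβ with rfl | rfl
    · exact absurd (one_smul ℝ γ) hne
    · rw [real_inner_smul_left] at hpos
      nlinarith
  · push_neg at hprop
    obtain ⟨p, hp⟩ := hΦ.crystallographic γ hγ β hβ
    obtain ⟨q, hq⟩ := hΦ.crystallographic β hβ γ hγ
    have hlt := strict_cs hΦ hβ hγ hprop
    rw [hp, hq] at hlt
    have hp1 : 1 ≤ p := by
      have : (0:ℝ) < (p:ℝ) := by rw [← hp]; positivity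
      exact_mod_cast this
    have hq1 : 1 ≤ q := by
      have : (0:ℝ) < (q:ℝ) := by
        rw [← hq]
        have : 0 < ⟪γ, β⟫ := by rwa [real_inner_comm β γ]
        positivity
      exact_mod_cast this
    have hpq : p * q ≤ 3 := by
      have : ((p * q : ℤ) : ℝ) < 4 := by push_cast; linarith
      have : p * q < 4 := by exact_mod_cast this
      omega
    by_cases hp2 : p = 1
    · have h := hΦ.reflect_mem γ hγ β hβ
      rw [hp, hp2] at h
      simpa using h
    · have hq2 : q = 1 := by
        have hp3 : 2 ≤ p := by omega
        nlinarith
      have h := hΦ.reflect_mem β hβ γ hγ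
      rw [hq, hq2] at h
      simp only [Int.cast_one, one_smul] at h
      have := neg_mem' hΦ h
      simpa [neg_sub] using this

lemma add_mem_of_inner_neg (hΦ : IsReducedCrystRootSystem Φ) {β γ : V} (hβ : β ∈ Φ)
    (hγ : γ ∈ Φ) (hneg : ⟪β, γ⟫ < 0) (hne : β ≠ -γ) : β + γ ∈ Φ := by
  have h := sub_mem_of_inner_pos hΦ hβ (neg_mem' hΦ hγ)
    (by rw [inner_neg_right]; linarith) hne
  simpa [sub_neg_eq_add] using h

lemma sub_simple_not_mem {n : ℕ} {s : Fin n → V} (hs : IsBaseOf Φ s)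
    {a a' : Fin n} (hne : a ≠ a') : s a - s a' ∉ Φ := by
  intro hmem
  obtain ⟨c, hc, hsign⟩ := hs.decomp _ hmem
  have key : ∀ i, ((c i : ℝ) - ((if i = a then 1 else 0) - if i = a' then 1 else 0)) = 0 := by
    have := Fintype.linearIndependent_iff.mp hs.indep
      (fun i => (c i : ℝ) - ((if i = a then 1 else 0) - if i = a' then 1 else 0))
    apply this
    have e1 : ∑ i, ((c i : ℝ) - ((if i = a then 1 else 0) - if i = a' then 1 else 0)) • s i
        = (∑ i, (c i : ℝ) • s i) - (s a - s a') := by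
      simp only [sub_smul, ite_smul, one_smul, zero_smul, Finset.sum_sub_distrib]
      simp
    rw [e1]
    rw [show (∑ i, (c i : ℝ) • s i) = ∑ i, c i • s i by
      refine Finset.sum_congr rfl fun i _ => ?_
      rw [Int.cast_smul_eq_zsmul]]
    rw [← hc]
    abel
  have ha : c a = 1 := by
    have := key a
    simp [hne] at this
    exact_mod_cast sub_eq_zero.mp this
  have ha' : c a' = -1 := by
    have := key a'
    simp [Ne.symm hne] at this
    have h2 : (c a' : ℝ) = -1 := by linarith
    exact_mod_cast h2
  rcases hsign with h | h
  · have := h a'; omega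
  · have := h a; omega

lemma inner_simple_nonpos (hΦ : IsReducedCrystRootSystem Φ) {n : ℕ} {s : Fin n → V}
    (hs : IsBaseOf Φ s) {a a' : Fin n} (hne : a ≠ a') : ⟪s a, s a'⟫ ≤ 0 := by
  by_contra h
  push_neg at h
  have hne' : s a ≠ s a' := fun he => hne (hs.indep.injective he)
  exact sub_simple_not_mem hs hne (sub_mem_of_inner_pos hΦ (hs.mem a) (hs.mem a') h hne')

end Aux

/-- Let `α` and `α'` be distinct, non-orthogonal simple roots and let `δ`
be a root.  If `δ + α` is nonzero and is not a root, then `δ + α − α'` is not a root. -/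
theorem add_simple_sub_simple_not_root
    {V : Type} [NormedAddCommGroup V] [InnerProductSpace ℝ V] [FiniteDimensional ℝ V]
    {Φ : Set V} (hΦ : IsReducedCrystRootSystem Φ)
    {n : ℕ} {s : Fin n → V} (hs : IsBaseOf Φ s)
    {a a' : Fin n} (hne : a ≠ a') (hno : ⟪s a, s a'⟫ ≠ 0)
    {δ : V} (hδ : δ ∈ Φ)
    (h0 : δ + s a ≠ 0) (h1 : δ + s a ∉ Φ) :
    δ + s a - s a' ∉ Φ := by
  intro hγmem
  have hA : 0 < ⟪s a', s a'⟫ := inner_self_pos' hΦ (hs.mem a')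
  have hB : 0 < ⟪s a, s a⟫ := inner_self_pos' hΦ (hs.mem a)
  have hD : 0 < ⟪δ, δ⟫ := inner_self_pos' hΦ hδ
  -- step 0
  have hαα' : ⟪s a, s a'⟫ < 0 := lt_of_le_of_ne (inner_simple_nonpos hΦ hs hne) hno
  -- step 1 : ⟪δ, s a⟫ ≥ 0
  have hδα : 0 ≤ ⟪δ, s a⟫ := by
    by_contra h
    push_neg at h
    have hne2 : δ ≠ -s a := by
      intro he; apply h0; rw [he]; abel
    exact h1 (add_mem_of_inner_neg hΦ hδ (hs.mem a) h hne2)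
  -- step 2 : ⟪γ, s a'⟫ ≥ 0
  have hγα' : 0 ≤ ⟪δ + s a - s a', s a'⟫ := by
    by_contra h
    push_neg at h
    have hne2 : δ + s a - s a' ≠ -s a' := by
      intro he
      apply h0
      have : δ + s a - s a' + s a' = -s a' + s a' := by rw [he]
      simpa using this
    have := add_mem_of_inner_neg hΦ hγmem (hs.mem a') h hne2
    apply h1
    have he : δ + s a - s a' + s a' = δ + s a := by abel
    rwa [he] at this
  -- integer pairings
  obtain ⟨k, hk⟩ := hΦ.crystallographic (s a') (hs.mem a') (s a) (hs.mem a)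
  obtain ⟨k', hk'⟩ := hΦ.crystallographic (s a) (hs.mem a) (s a') (hs.mem a')
  obtain ⟨m, hm⟩ := hΦ.crystallographic (s a') (hs.mem a') δ hδ
  obtain ⟨u, hu⟩ := hΦ.crystallographic (s a) (hs.mem a) δ hδ
  obtain ⟨w, hw⟩ := hΦ.crystallographic (s a') (hs.mem a') _ hγmem
  obtain ⟨v, hv⟩ := hΦ.crystallographic (s a) (hs.mem a) _ hγmem
  have hcomm : ⟪s a', s a⟫ = ⟪s a, s a'⟫ := real_inner_comm (s a) (s a')
  have hk1 : k ≤ -1 := by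
    have : (k:ℝ) < 0 := by rw [← hk]; exact div_neg_of_neg_of_pos (by linarith) hA
    have : k < 0 := by exact_mod_cast this
    omega
  have hk'1 : k' ≤ -1 := by
    have : (k':ℝ) < 0 := by
      rw [← hk', hcomm]; exact div_neg_of_neg_of_pos (by linarith) hB
    have : k' < 0 := by exact_mod_cast this
    omega
  have hu0 : 0 ≤ u := by
    have : (0:ℝ) ≤ (u:ℝ) := by rw [← hu]; positivity
    exact_mod_cast this
  have hw0 : 0 ≤ w := by
    have : (0:ℝ) ≤ (w:ℝ) := by rw [← hw]; positivity
    exact_mod_cast this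
  -- w = m + k - 2
  have hwmk : w = m + k - 2 := by
    have hreal : (w:ℝ) = (m:ℝ) + (k:ℝ) - 2 := by
      rw [← hw, ← hm, ← hk]
      rw [inner_sub_left, inner_add_left]
      field_simp
    exact_mod_cast hreal
  have hm3 : 3 ≤ m := by omega
  -- ⟪δ, s a'⟫ > 0
  have hδα' : 0 < ⟪δ, s a'⟫ := by
    have h3 : (3:ℝ) ≤ (m:ℝ) := by exact_mod_cast hm3
    rw [← hm, le_div_iff₀ hA] at h3
    linarith
  obtain ⟨m', hm'⟩ := hΦ.crystallographic δ hδ (s a') (hs.mem a')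
  have hm'1 : 1 ≤ m' := by
    have : (0:ℝ) < (m':ℝ) := by
      rw [← hm']
      have h2 : 0 < ⟪s a', δ⟫ := by rwa [real_inner_comm]
      exact div_pos (by linarith) hD
    have : 0 < m' := by exact_mod_cast this
    omega
  -- δ not proportional to s a'
  have hprop : ∀ t : ℝ, δ ≠ t • s a' := by
    intro t he
    have hmem : t • s a' ∈ Φ := he ▸ hδ
    have hmt : (m:ℝ) = 2 * t := by
      rw [← hm, he, real_inner_smul_left]
      field_simp
    rcases hΦ.reduced (s a') (hs.mem a') t hmem with rfl | rfl
    · have : (m:ℝ) = 2 := by rw [hmt]; norm_num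
      have : m = 2 := by exact_mod_cast this
      omega
    · have : (m:ℝ) = -2 := by rw [hmt]; norm_num
      have : m = -2 := by exact_mod_cast this
      omega
  have hcs1 := strict_cs hΦ hδ (hs.mem a') hprop
  rw [hm, hm'] at hcs1
  have hmm' : m * m' ≤ 3 := by
    have h4 : ((m * m' : ℤ) : ℝ) < 4 := by push_cast; linarith
    have : m * m' < 4 := by exact_mod_cast h4
    omega
  have hm_eq : m = 3 ∧ m' = 1 := by
    constructor <;> nlinarith [mul_le_mul_of_nonneg_left hm'1 (by omega : (0:ℤ) ≤ m)]
  obtain ⟨hmeq, hm'eq⟩ := hm_eq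
  have hkeq : k = -1 := by omega
  have hweq : w = 0 := by omega
  -- real consequences
  have hδα'v : ⟪δ, s a'⟫ * 2 = 3 * ⟪s a', s a'⟫ := by
    have : 2 * ⟪δ, s a'⟫ / ⟪s a', s a'⟫ = 3 := by rw [hm, hmeq]; norm_num
    field_simp at this
    linarith
  have hDv : ⟪δ, δ⟫ = 3 * ⟪s a', s a'⟫ := by
    have : 2 * ⟪s a', δ⟫ / ⟪δ, δ⟫ = 1 := by rw [hm', hm'eq]; norm_num
    rw [real_inner_comm] at this
    field_simp at this
    linarith
  -- v = u + 2 - k'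
  have hvuk : v = u + 2 - k' := by
    have hreal : (v:ℝ) = (u:ℝ) + 2 - (k':ℝ) := by
      rw [← hv, ← hu, ← hk']
      rw [inner_sub_left, inner_add_left]
      field_simp
    exact_mod_cast hreal
  have hv3 : 3 ≤ v := by omega
  have hγα : 0 < ⟪δ + s a - s a', s a⟫ := by
    have h3 : (3:ℝ) ≤ (v:ℝ) := by exact_mod_cast hv3
    rw [← hv, le_div_iff₀ hB] at h3
    linarith
  obtain ⟨v', hv'⟩ := hΦ.crystallographic _ hγmem (s a) (hs.mem a)
  have hv'1 : 1 ≤ v' := by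
    have : (0:ℝ) < (v':ℝ) := by
      rw [← hv']
      have h2 : 0 < ⟪s a, δ + s a - s a'⟫ := by rwa [real_inner_comm]
      exact div_pos (by linarith) (inner_self_pos' hΦ hγmem)
    have : 0 < v' := by exact_mod_cast this
    omega
  -- γ not proportional to s a
  have hprop2 : ∀ t : ℝ, δ + s a - s a' ≠ t • s a := by
    intro t he
    have hmem : t • s a ∈ Φ := he ▸ hγmem
    have hwt : (w:ℝ) = t * (k:ℝ) := by
      rw [← hw, he, real_inner_smul_left, ← hk]
      ring
    rcases hΦ.reduced (s a) (hs.mem a) t hmem with rfl | rfl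
    · rw [hweq, hkeq] at hwt; norm_num at hwt
    · rw [hweq, hkeq] at hwt; norm_num at hwt
  have hcs2 := strict_cs hΦ hγmem (hs.mem a) hprop2
  rw [hv, hv'] at hcs2
  have hvv' : v * v' ≤ 3 := by
    have h4 : ((v * v' : ℤ) : ℝ) < 4 := by push_cast; linarith
    have : v * v' < 4 := by exact_mod_cast h4
    omega
  have hveq : v = 3 := by nlinarith [mul_le_mul_of_nonneg_left hv'1 (by omega : (0:ℤ) ≤ v)]
  have hueq : u = 0 := by omega
  have hδαv : ⟪δ, s a⟫ = 0 := by
    have : 2 * ⟪δ, s a⟫ / ⟪s a, s a⟫ = 0 := by rw [hu, hueq]; norm_num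
    field_simp at this
    linarith
  -- final contradiction : s a - s a' ∈ Φ
  have hγδ : 0 < ⟪δ + s a - s a', δ⟫ := by
    rw [inner_sub_left, inner_add_left, real_inner_comm δ (s a), real_inner_comm δ (s a')]
    rw [hδαv, hDv]
    linarith
  have hγδne : δ + s a - s a' ≠ δ := by
    intro he
    apply hne
    apply hs.indep.injective
    have : s a = s a' := by
      have h2 : δ + s a - s a' - δ = 0 := by rw [he]; abel
      have h3 : s a - s a' = 0 := by rw [← h2]; abel
      rwa [sub_eq_zero] at h3
    exact this
  have hsub := sub_mem_of_inner_pos hΦ hγmem hδ hγδ hγδne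
  have heq : δ + s a - s a' - δ = s a - s a' := by abel
  rw [heq] at hsub
  exact sub_simple_not_mem hs hne hsub
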